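/- arXiv:2401.07636 — 2 statements merged into one kernel-verified Lean document; each statement's English description precedes it below -/
import Mathlib

section
/- If φ: V(T) → V(T') is an isomorphism of the rooted trees (T,r) and (T',r'), then the compressed descendant labelings satisfy cdl_T(v) = cdl_{T'}(φ(v)) for every vertex v ∈ V(T). -/
attribute [local instance] Classical.propDecidable

namespace AHU

variable {V : Type*}

/-- The height of the rooted tree `(G, r)`: maximum distance from the root. -/
noncomputable def height (G : SimpleGraph V) [Fintype V] (r : V) : ℕ :=
  Finset.univ.sup fun v => G.dist r v

/-- The level of a vertex: height minus distance from the root. -/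
noncomputable def lvl (G : SimpleGraph V) [Fintype V] (r : V) (v : V) : ℕ :=
  height G r - G.dist r v

/-- `T_i`: the set of vertices at level `i`. -/
noncomputable def levelSet (G : SimpleGraph V) [Fintype V] (r : V) (i : ℕ) : Finset V :=
  Finset.univ.filter fun v => lvl G r v = i

/-- A vertex is a leaf if it has degree at most one. -/
def IsLeaf (G : SimpleGraph V) (v : V) : Prop :=
  {u | G.Adj v u}.ncard ≤ 1

/-- The parent of `v ≠ r`: the unique neighbour of `v` lying closer to the root
(on the unique path from `r` to `v`).  For `v = r` we return `v` itself. -/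
noncomputable def parent (G : SimpleGraph V) (r v : V) : V :=
  if h : ∃ p, G.Adj p v ∧ G.dist r p + 1 = G.dist r v then h.choose else v

/-- The set of children of `u`. -/
noncomputable def children (G : SimpleGraph V) [Fintype V] (r u : V) : Finset V :=
  Finset.univ.filter fun v => v ≠ r ∧ parent G r v = u

/-- The label-compression of a finite set `S` of tuples: the unique order isomorphism
from `(S, ≤lex)` onto `{0, …, |S| - 1}`, i.e. `s ↦ #{t ∈ S | t <lex s}`. -/
noncomputable def compress (S : Finset (List ℕ)) (s : List ℕ) : ℕ :=
  (S.filter fun t => List.Lex (· < ·) t s).card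

/-- Auxiliary, level-indexed version of the compressed descendant labeling:
`labelAt G r i v` is the label of a vertex `v` of level `i`. -/
noncomputable def labelAt (G : SimpleGraph V) [Fintype V] (r : V) : ℕ → V → List ℕ
  | 0, _ => []
  | (i + 1), v =>
      if IsLeaf G v then []
      else
        Multiset.sort
          ((children G r v).val.map fun u =>
            compress ((levelSet G r i).image (labelAt G r i)) (labelAt G r i u)) (· ≤ ·)

/-- The compressed descendant labeling `cdl : V(T) → ℕ*`. -/
noncomputable def cdl (G : SimpleGraph V) [Fintype V] (r : V) (v : V) : List ℕ :=
  labelAt G r (lvl G r v) v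

/-- `𝓛(W)`: the multiset of compressed descendant labels of the vertices of `W`. -/
noncomputable def labels (G : SimpleGraph V) [Fintype V] (r : V) (W : Finset V) :
    Multiset (List ℕ) :=
  W.val.map (cdl G r)

/-- The level-label condition: the multisets of labels agree on every level
`i = 0, 1, …, max(height T, height T')`. -/
noncomputable def LevelLabelCondition {V' : Type*} (G : SimpleGraph V) [Fintype V] (r : V)
    (G' : SimpleGraph V') [Fintype V'] (r' : V') : Prop :=
  ∀ i ≤ max (height G r) (height G' r' ),
    labels G r (levelSet G r i) = labels G' r' (levelSet G' r' i)

/-!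
A root-preserving isomorphism preserves graph distances, hence heights, levels, level sets and
leaves; in a tree it also preserves parents, hence children. By induction on the level, the set
of labels being compressed at each level is the same in both trees and the children of `v` and
`φ v` correspond, so `labelAt` agrees at `v` and `φ v`.
-/

section GraphLemmas

variable {W W' : Type*} {G : SimpleGraph W} {G' : SimpleGraph W'}

theorem _root_.SimpleGraph.Hom.edist_map_le (f : G →g G') (u v : W) :
    G'.edist (f u) (f v) ≤ G.edist u v := by
  by_cases h : G.Reachable u v
  · obtain ⟨p, hp⟩ := h.exists_walk_length_eq_edist
    calc G'.edist (f u) (f v) ≤ (p.map f).length := SimpleGraph.edist_le _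
      _ = G.edist u v := by rw [SimpleGraph.Walk.length_map, hp]
  · rw [SimpleGraph.edist_eq_top_of_not_reachable h]
    exact le_top

theorem _root_.SimpleGraph.Iso.edist_map (φ : G ≃g G') (u v : W) :
    G'.edist (φ u) (φ v) = G.edist u v :=
  le_antisymm (φ.toHom.edist_map_le u v) <| by
    simpa using φ.symm.toHom.edist_map_le (φ u) (φ v)

theorem _root_.SimpleGraph.Iso.dist_map (φ : G ≃g G') (u v : W) :
    G'.dist (φ u) (φ v) = G.dist u v := by
  rw [SimpleGraph.dist, SimpleGraph.dist, φ.edist_map]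

theorem _root_.SimpleGraph.IsTree.eq_of_adj_of_dist_add_one (hT : G.IsTree) {r v p q : W}
    (hp : G.Adj p v) (hpd : G.dist r p + 1 = G.dist r v)
    (hq : G.Adj q v) (hqd : G.dist r q + 1 = G.dist r v) : p = q := by
  obtain ⟨Wp, hWp⟩ := hT.connected.exists_walk_length_eq_dist r p
  obtain ⟨Wq, hWq⟩ := hT.connected.exists_walk_length_eq_dist r q
  have hPp : (Wp.concat hp).IsPath :=
    (Wp.concat hp).isPath_of_length_eq_dist (by rw [SimpleGraph.Walk.length_concat, hWp, hpd])
  have hPq : (Wq.concat hq).IsPath :=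
    (Wq.concat hq).isPath_of_length_eq_dist (by rw [SimpleGraph.Walk.length_concat, hWq, hqd])
  have heq : Wp.concat hp = Wq.concat hq := (hT.existsUnique_path r v).unique hPp hPq
  simpa [SimpleGraph.Walk.reverse_concat] using
    congrArg (fun w : G.Walk r v => w.reverse.getVert 1) heq

end GraphLemmas

section Transport

variable {V' : Type*} {G : SimpleGraph V} {G' : SimpleGraph V'}

theorem isLeaf_map (φ : G ≃g G') (v : V) : IsLeaf G' (φ v) ↔ IsLeaf G v := by
  have hpre : φ ⁻¹' G'.neighborSet (φ v) = G.neighborSet v := Set.ext fun _ => φ.map_adj_iff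
  show (G'.neighborSet (φ v)).ncard ≤ 1 ↔ (G.neighborSet v).ncard ≤ 1
  rw [← hpre, Set.ncard_preimage_of_injective_subset_range φ.injective (by simp)]

-- `parent` is defined by choice; in a tree the neighbour one step closer to the root is unique.
theorem parent_map (hT : G.IsTree) (φ : G ≃g G') (r v : V) :
    parent G' (φ r) (φ v) = φ (parent G r v) := by
  have hstep : ∀ p, (G'.Adj (φ p) (φ v) ∧ G'.dist (φ r) (φ p) + 1 = G'.dist (φ r) (φ v)) ↔
      (G.Adj p v ∧ G.dist r p + 1 = G.dist r v) := by
    simp [φ.map_adj_iff, φ.dist_map]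
  have hex : (∃ p', G'.Adj p' (φ v) ∧ G'.dist (φ r) p' + 1 = G'.dist (φ r) (φ v)) ↔
      ∃ p, G.Adj p v ∧ G.dist r p + 1 = G.dist r v :=
    φ.surjective.exists.trans (exists_congr hstep)
  unfold parent
  by_cases h : ∃ p, G.Adj p v ∧ G.dist r p + 1 = G.dist r v
  · rw [dif_pos h, dif_pos (hex.2 h), ← φ.symm_apply_eq]
    have hchoice := (hex.2 h).choose_spec
    rw [← φ.apply_symm_apply (hex.2 h).choose, hstep] at hchoice
    exact hT.eq_of_adj_of_dist_add_one hchoice.1 hchoice.2 h.choose_spec.1 h.choose_spec.2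
  · rw [dif_neg h, dif_neg (mt hex.1 h)]

variable [Fintype V] [Fintype V']

theorem height_map (φ : G ≃g G') (r : V) : height G' (φ r) = height G r := by
  rw [height, height, ← Finset.map_univ_equiv φ.toEquiv, Finset.sup_map]
  simp [Function.comp_def, φ.dist_map]

theorem lvl_map (φ : G ≃g G') (r v : V) : lvl G' (φ r) (φ v) = lvl G r v := by
  rw [lvl, lvl, height_map, φ.dist_map]

theorem levelSet_map (φ : G ≃g G') (r : V) (i : ℕ) :
    levelSet G' (φ r) i = (levelSet G r i).map φ.toEquiv.toEmbedding := by
  rw [levelSet, levelSet, ← Finset.map_univ_equiv φ.toEquiv, Finset.filter_map]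
  simp [lvl_map]

theorem children_map (hT : G.IsTree) (φ : G ≃g G') (r v : V) :
    children G' (φ r) (φ v) = (children G r v).map φ.toEquiv.toEmbedding := by
  rw [children, children, ← Finset.map_univ_equiv φ.toEquiv, Finset.filter_map]
  simp [parent_map hT]

theorem labelAt_map (hT : G.IsTree) (φ : G ≃g G') (r : V) (i : ℕ) (v : V) :
    labelAt G' (φ r) i (φ v) = labelAt G r i v := by
  induction i generalizing v with
  | zero => rfl
  | succ i ih =>
    have hlabels : (levelSet G' (φ r) i).image (labelAt G' (φ r) i)
        = (levelSet G r i).image (labelAt G r i) := by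
      rw [levelSet_map, Finset.map_eq_image, Finset.image_image]
      exact Finset.image_congr fun u _ => ih u
    simp only [labelAt, isLeaf_map, hlabels, children_map hT, Finset.map_val, Multiset.map_map,
      Function.comp_def, Equiv.coe_toEmbedding, RelIso.coe_fn_toEquiv, ih]

end Transport

theorem cdl_eq_of_iso_general {V V' : Type*} [Fintype V] [Fintype V']
    (G : SimpleGraph V) (r : V) (G' : SimpleGraph V') (r' : V')
    (hT : G.IsTree) (φ : G ≃g G') (hroot : φ r = r') :
    ∀ v : V, cdl G r v = cdl G' r' (φ v) := by
  subst hroot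
  intro v
  rw [cdl, cdl, lvl_map, labelAt_map hT]

/-- If `φ` is an isomorphism of the rooted trees `(T, r)` and `(T', r')`, then the
compressed descendant labelings satisfy `cdl_T(v) = cdl_{T'}(φ v)` for every vertex `v`. -/
theorem cdl_eq_of_iso {V V' : Type*} [Fintype V] [Fintype V']
    (G : SimpleGraph V) (r : V) (G' : SimpleGraph V') (r' : V')
    (hT : G.IsTree) (hT' : G'.IsTree) (φ : G ≃g G') (hroot : φ r = r') :
    ∀ v : V, cdl G r v = cdl G' r' (φ v) :=
  cdl_eq_of_iso_general G r G' r' hT φ hroot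

end AHU
end

section
/- If two rooted trees (T,r) and (T',r') are isomorphic, then they satisfy the level-label condition: L(T_i) = L(T'_i) as multisets for every i = 0, 1, ..., max(height(T), height(T')). -/
/-!
A root-preserving isomorphism preserves distances to the root, hence heights and levels, and
it preserves degrees, hence leaves. In a tree the parent of `v` is the unique neighbour one step
closer to the root, so children are described by adjacency and distance alone and are
transported as well. Induction on the level then shows that `φ` preserves every label.
-/

attribute [local instance] Classical.propDecidable

namespace AHU

variable {V : Type*}

theorem _root_.SimpleGraph.Iso.dist_apply {V' : Type*} {G : SimpleGraph V} {G' : SimpleGraph V'}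
    (φ : G ≃g G') (u v : V) : G'.dist (φ u) (φ v) = G.dist u v := by
  simp only [SimpleGraph.dist_eq_sInf]
  congr 1
  ext n
  constructor
  · rintro ⟨w, rfl⟩
    exact ⟨(w.map φ.symm.toHom).copy (φ.symm_apply_apply u) (φ.symm_apply_apply v), by simp⟩
  · rintro ⟨w, rfl⟩
    exact ⟨w.map φ.toHom, by simp⟩

theorem isLeaf_iso_apply_iff {V' : Type*} {G : SimpleGraph V} {G' : SimpleGraph V'}
    (φ : G ≃g G') (v : V) : IsLeaf G' (φ v) ↔ IsLeaf G v := by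
  have : {u | G'.Adj (φ v) u} = φ.symm ⁻¹' {u | G.Adj v u} := by
    ext u'
    simp [← φ.map_adj_iff (w := φ.symm u')]
  rw [IsLeaf, IsLeaf, this, Set.ncard_preimage_of_injective_subset_range φ.symm.injective
    (by simp [φ.symm.surjective.range_eq])]

section Parent

variable {G : SimpleGraph V} {r u v : V}

theorem exists_adj_dist_add_one_eq (hG : G.Connected) (hv : v ≠ r) :
    ∃ p, G.Adj p v ∧ G.dist r p + 1 = G.dist r v := by
  obtain ⟨w, hw⟩ := hG.exists_walk_length_eq_dist r v
  have hnil : ¬ w.Nil := SimpleGraph.Walk.not_nil_of_ne hv.symm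
  have hadj := w.adj_penultimate hnil
  refine ⟨w.penultimate, hadj, ?_⟩
  have hle : G.dist r w.penultimate ≤ w.length - 1 := by
    simpa using SimpleGraph.dist_le w.dropLast
  have hge : G.dist r v ≤ G.dist r w.penultimate + 1 := by
    have := hG.dist_triangle (u := r) (v := w.penultimate) (w := v)
    rwa [SimpleGraph.dist_eq_one_iff_adj.mpr hadj] at this
  have hpos : 0 < G.dist r v := hG.pos_dist_of_ne hv.symm
  omega

theorem eq_of_adj_dist_add_one_eq (hG : G.IsTree) {p q : V}
    (hp : G.Adj p v ∧ G.dist r p + 1 = G.dist r v)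
    (hq : G.Adj q v ∧ G.dist r q + 1 = G.dist r v) : p = q := by
  -- a geodesic to `p` (or `q`) followed by the edge to `v` is a geodesic, hence the unique path
  obtain ⟨wp, hwp⟩ := hG.connected.exists_walk_length_eq_dist r p
  obtain ⟨wq, hwq⟩ := hG.connected.exists_walk_length_eq_dist r q
  have hPp := (wp.concat hp.1).isPath_of_length_eq_dist (by simp [hwp, hp.2])
  have hPq := (wq.concat hq.1).isPath_of_length_eq_dist (by simp [hwq, hq.2])
  have hpath := (hG.isAcyclic.subsingleton_path r v).elim ⟨_, hPp⟩ ⟨_, hPq⟩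
  simpa using congrArg (fun P : G.Path r v => P.1.penultimate) hpath

theorem parent_eq_of_adj_of_dist_add_one_eq (hG : G.IsTree)
    (h : G.Adj u v ∧ G.dist r u + 1 = G.dist r v) : parent G r v = u := by
  rw [parent, dif_pos ⟨u, h⟩]
  exact eq_of_adj_dist_add_one_eq hG
    (⟨u, h⟩ : ∃ p, G.Adj p v ∧ G.dist r p + 1 = G.dist r v).choose_spec h

theorem adj_parent_and_dist_add_one_eq (hG : G.IsTree) (hv : v ≠ r) :
    G.Adj (parent G r v) v ∧ G.dist r (parent G r v) + 1 = G.dist r v := by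
  rw [parent, dif_pos (exists_adj_dist_add_one_eq hG.connected hv)]
  exact (exists_adj_dist_add_one_eq hG.connected hv).choose_spec

theorem mem_children_iff [Fintype V] (hG : G.IsTree) :
    v ∈ children G r u ↔ G.Adj u v ∧ G.dist r u + 1 = G.dist r v := by
  simp only [children, Finset.mem_filter, Finset.mem_univ, true_and]
  constructor
  · rintro ⟨hv, rfl⟩
    exact adj_parent_and_dist_add_one_eq hG hv
  · intro h
    refine ⟨?_, parent_eq_of_adj_of_dist_add_one_eq hG h⟩
    rintro rfl
    simp at h

end Parent

section Iso

variable {V' : Type*} [Fintype V] [Fintype V'] {G : SimpleGraph V} {G' : SimpleGraph V'}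
  {r : V} {r' : V'} (φ : G ≃g G') (hroot : φ r = r')
include hroot

theorem height_iso : height G' r' = height G r := by
  rw [height, height, ← Finset.univ_map_equiv_to_embedding φ.toEquiv, Finset.sup_map]
  simp [← hroot, Function.comp_def, φ.dist_apply]

theorem lvl_iso_apply (v : V) : lvl G' r' (φ v) = lvl G r v := by
  rw [lvl, lvl, height_iso φ hroot, ← hroot, φ.dist_apply]

theorem levelSet_iso (i : ℕ) :
    levelSet G' r' i = (levelSet G r i).map φ.toEquiv.toEmbedding := by
  ext v'
  obtain ⟨v, rfl⟩ := φ.surjective v'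
  refine Iff.trans ?_ (Finset.mem_map' φ.toEquiv.toEmbedding).symm
  simp [levelSet, lvl_iso_apply φ hroot]

theorem children_iso_apply (hG : G.IsTree) (u : V) :
    children G' r' (φ u) = (children G r u).map φ.toEquiv.toEmbedding := by
  ext v'
  obtain ⟨v, rfl⟩ := φ.surjective v'
  refine Iff.trans ?_ (Finset.mem_map' φ.toEquiv.toEmbedding).symm
  simp [mem_children_iff hG, mem_children_iff (φ.isTree_iff.mp hG), ← hroot, φ.dist_apply,
    φ.map_adj_iff]

theorem labelAt_iso_apply (hG : G.IsTree) (i : ℕ) (v : V) :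
    labelAt G' r' i (φ v) = labelAt G r i v := by
  induction i generalizing v with
  | zero => rfl
  | succ i ih =>
    have himage : (levelSet G' r' i).image (labelAt G' r' i)
        = (levelSet G r i).image (labelAt G r i) := by
      rw [levelSet_iso φ hroot, Finset.map_eq_image, Finset.image_image]
      exact Finset.image_congr fun v _ => ih v
    simp only [labelAt, isLeaf_iso_apply_iff, children_iso_apply φ hroot hG, Finset.map_val,
      Multiset.map_map, Function.comp_def, Equiv.coe_toEmbedding, RelIso.coe_fn_toEquiv, himage, ih]

theorem cdl_iso_apply (hG : G.IsTree) (v : V) : cdl G' r' (φ v) = cdl G r v := by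
  rw [cdl, cdl, lvl_iso_apply φ hroot, labelAt_iso_apply φ hroot hG]

end Iso

theorem levelLabelCondition_of_iso_general {V V' : Type*} [Fintype V] [Fintype V']
    (G : SimpleGraph V) (r : V) (G' : SimpleGraph V') (r' : V')
    (hT : G.IsTree) (φ : G ≃g G') (hroot : φ r = r') :
    LevelLabelCondition G r G' r' := by
  intro i _
  rw [labels, labels, levelSet_iso φ hroot, Finset.map_val, Multiset.map_map]
  exact Multiset.map_congr rfl fun v _ => (cdl_iso_apply φ hroot hT v).symm

/-- If two rooted trees are isomorphic, then they satisfy the level-label condition. -/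
theorem levelLabelCondition_of_iso {V V' : Type*} [Fintype V] [Fintype V']
    (G : SimpleGraph V) (r : V) (G' : SimpleGraph V') (r' : V')
    (hT : G.IsTree) (hT' : G'.IsTree) (φ : G ≃g G') (hroot : φ r = r') :
    LevelLabelCondition G r G' r' :=
  levelLabelCondition_of_iso_general G r G' r' hT φ hroot

end AHU
end
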